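/- Let X satisfy E|X|^p < ∞ for some p > 0 and let α > 1. Then ∑_{k=1}^∞ (Log k)^{-α} · P(|X|^p > k / (Log k)^α) < ∞, where Log x := log(max{x, e}). -/

import Mathlib

open MeasureTheory Filter

noncomputable def Log (x : ℝ) : ℝ := Real.log (max x (Real.exp 1))

/-
Put Y = |X|^p and a_k = k / (Log k)^α. Once log k ≥ 4α the weight (Log (k+1))^{-α} is at most
2 (a_{k+1} - a_k), because (log (k+1) / log k)^α ≤ exp (1/(4k)) makes the two logarithmic factors
nearly equal. On the other hand (a_{k+1} - a_k) P(Y > a_{k+1}) ≤ E min(Y, a_{k+1}) - E min(Y, a_k),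
so the tail of the series is dominated by a telescoping sum bounded by 2 E Y.
-/

lemma one_le_Log (x : ℝ) : 1 ≤ Log x := by
  simpa [Log] using Real.log_le_log (Real.exp_pos 1) (le_max_right x (Real.exp 1))

lemma Log_pos (x : ℝ) : 0 < Log x := one_pos.trans_le (one_le_Log x)

lemma Log_of_exp_one_le {x : ℝ} (hx : Real.exp 1 ≤ x) : Log x = Real.log x := by
  rw [Log, max_eq_left hx]

lemma rpow_le_exp_sub_one_mul {r α : ℝ} (hr : 0 ≤ r) (hα : 0 ≤ α) :
    r ^ α ≤ Real.exp ((r - 1) * α) := by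
  rw [Real.exp_mul]
  exact Real.rpow_le_rpow hr (by linarith [Real.add_one_le_exp (r - 1)]) hα

lemma log_add_one_sub_log_le {x : ℝ} (hx : 0 < x) : Real.log (x + 1) - Real.log x ≤ 1 / x := by
  rw [← Real.log_div (by positivity) hx.ne']
  calc Real.log ((x + 1) / x) ≤ (x + 1) / x - 1 := Real.log_le_sub_one_of_pos (by positivity)
    _ = 1 / x := by field_simp; ring

lemma mul_log_add_one_div_log_rpow_sub_one_le {x α : ℝ} (hα : 0 ≤ α) (hx : 1 < x)
    (hαx : 4 * α ≤ Real.log x) :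
    x * ((Real.log (x + 1) / Real.log x) ^ α - 1) ≤ 1 / 2 := by
  have hx0 : 0 < x := by linarith
  have hL : 0 < Real.log x := Real.log_pos hx
  set r := Real.log (x + 1) / Real.log x
  have hr : 0 ≤ r := div_nonneg (Real.log_nonneg (by linarith)) hL.le
  set t := 1 / (4 * x)
  have ht : (r - 1) * α ≤ t := calc
    (r - 1) * α = (Real.log (x + 1) - Real.log x) * (α / Real.log x) := by
      simp only [r]; field_simp
    _ ≤ 1 / x * (1 / 4) :=
      mul_le_mul (log_add_one_sub_log_le hx0) ((div_le_iff₀ hL).2 (by linarith))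
        (by positivity) (by positivity)
    _ = t := by ring
  have ht1 : t < 1 := by
    rw [div_lt_one (by positivity)]; linarith
  calc x * (r ^ α - 1) ≤ x * (1 / (1 - t) - 1) := by
        gcongr
        calc r ^ α ≤ Real.exp ((r - 1) * α) := rpow_le_exp_sub_one_mul hr hα
          _ ≤ Real.exp t := Real.exp_le_exp.2 ht
          _ ≤ 1 / (1 - t) := Real.exp_bound_div_one_sub_of_interval (by positivity) ht1
    _ = x / (4 * x - 1) := by
        have h4x : 4 * x - 1 ≠ 0 := by linarith
        have h1t : 1 - t = (4 * x - 1) / (4 * x) := by simp only [t]; field_simp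
        rw [h1t, one_div_div, div_sub_one h4x]; ring
    _ ≤ 1 / 2 := by
        rw [div_le_div_iff₀ (by linarith) two_pos]; linarith

lemma half_Log_rpow_neg_le_sub {x α : ℝ} (hα : 0 ≤ α) (hx : Real.exp 1 ≤ x)
    (hαx : 4 * α ≤ Real.log x) :
    1 / 2 * Log (x + 1) ^ (-α) ≤ (x + 1) / Log (x + 1) ^ α - x / Log x ^ α := by
  have hx1 : 1 < x := by linarith [Real.add_one_le_exp (1 : ℝ)]
  have hL : 0 < Real.log x := Real.log_pos hx1
  have hL1 : 0 < Real.log (x + 1) := Real.log_pos (by linarith)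
  have key := mul_log_add_one_div_log_rpow_sub_one_le hα hx1 hαx
  rw [Log_of_exp_one_le hx, Log_of_exp_one_le (by linarith), Real.rpow_neg hL1.le,
    Real.div_rpow hL1.le hL.le] at *
  have hA := Real.rpow_pos_of_pos hL α
  have hB := Real.rpow_pos_of_pos hL1 α
  rw [div_sub_div _ _ hB.ne' hA.ne', le_div_iff₀ (by positivity)]
  field_simp at key ⊢
  nlinarith

section Truncation

variable {Ω : Type*} [MeasurableSpace Ω] {μ : Measure Ω} {Y : Ω → ℝ}

lemma integrable_min_const (hY : Integrable Y μ) (hY0 : ∀ ω, 0 ≤ Y ω) {c : ℝ} (hc : 0 ≤ c) :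
    Integrable (fun ω => min (Y ω) c) μ := by
  refine hY.mono (hY.aestronglyMeasurable.inf aestronglyMeasurable_const) (ae_of_all _ fun ω => ?_)
  simp only [Real.norm_eq_abs, abs_of_nonneg (le_min (hY0 ω) hc), abs_of_nonneg (hY0 ω)]
  exact min_le_left _ _

lemma sub_mul_measureReal_lt_le_integral_min_sub (hY : Integrable Y μ) (hY0 : ∀ ω, 0 ≤ Y ω)
    {b c : ℝ} (hb : 0 ≤ b) (hbc : b ≤ c) :
    (c - b) * μ.real {ω | c < Y ω} ≤ ∫ ω, min (Y ω) c ∂μ - ∫ ω, min (Y ω) b ∂μ := by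
  rcases hbc.eq_or_lt with rfl | hbc
  · simp
  set f := fun ω => min (Y ω) c - min (Y ω) b
  have hf : Integrable f μ :=
    (integrable_min_const hY hY0 (hb.trans hbc.le)).sub (integrable_min_const hY hY0 hb)
  have hf0 : 0 ≤ᵐ[μ] f := ae_of_all _ fun ω => sub_nonneg.2 (min_le_min_left _ hbc.le)
  have hsub : {ω | c < Y ω} ⊆ {ω | c - b ≤ f ω} := fun ω (hω : c < Y ω) => by
    simp only [Set.mem_ofPred_eq, f, min_eq_right hω.le, min_eq_right (hbc.trans hω).le, le_refl]
  rw [← integral_sub (integrable_min_const hY hY0 (hb.trans hbc.le))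
    (integrable_min_const hY hY0 hb)]
  calc (c - b) * μ.real {ω | c < Y ω}
      ≤ (c - b) * μ.real {ω | c - b ≤ f ω} := by
        gcongr
        exact (hf.measure_ge_lt_top (sub_pos.2 hbc)).ne
    _ ≤ ∫ ω, f ω ∂μ := mul_meas_ge_le_integral_of_nonneg hf0 hf _

lemma summable_sub_mul_measureReal_lt {a : ℕ → ℝ} (ha : Monotone a) (ha0 : 0 ≤ a 0)
    (hY : Integrable Y μ) (hY0 : ∀ ω, 0 ≤ Y ω) :
    Summable fun k => (a (k + 1) - a k) * μ.real {ω | a (k + 1) < Y ω} := by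
  set g := fun k => ∫ ω, min (Y ω) (a k) ∂μ
  have hstep k := sub_mul_measureReal_lt_le_integral_min_sub hY hY0
    (ha0.trans (ha (Nat.zero_le k))) (ha k.le_succ)
  refine summable_of_sum_range_le (c := ∫ ω, Y ω ∂μ)
    (fun k => mul_nonneg (sub_nonneg.2 (ha k.le_succ)) measureReal_nonneg) fun n => ?_
  calc _ ≤ ∑ k ∈ Finset.range n, (g (k + 1) - g k) := Finset.sum_le_sum fun k _ => hstep k
    _ = g n - g 0 := Finset.sum_range_sub g n
    _ ≤ ∫ ω, Y ω ∂μ := by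
      have hg0 : 0 ≤ g 0 := integral_nonneg fun ω => le_min (hY0 ω) ha0
      have hgn : g n ≤ ∫ ω, Y ω ∂μ :=
        integral_mono (integrable_min_const hY hY0 (ha0.trans (ha n.zero_le))) hY
          fun ω => min_le_left _ _
      linarith

end Truncation

theorem stmt_11_general {Ω : Type*} [MeasurableSpace Ω] (μ : Measure Ω)
    (X : Ω → ℝ)
    (p : ℝ) (hXp : Integrable (fun ω => |X ω| ^ p) μ)
    (α : ℝ) (hα : 1 < α) :
    Summable (fun k : ℕ =>
      Log k ^ (-α) * (μ {ω | (k : ℝ) / Log k ^ α < |X ω| ^ p}).toReal) := by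
  set a : ℕ → ℝ := fun k => k / Log k ^ α
  set N := ⌈Real.exp (4 * α)⌉₊
  have hgrowth k : 1 / 2 * Log (k + 1 + N : ℕ) ^ (-α) ≤ a (k + 1 + N) - a (k + N) := by
    have hk : Real.exp (4 * α) ≤ (k + N : ℕ) :=
      (Nat.le_ceil _).trans (by exact_mod_cast Nat.le_add_left N k)
    have := half_Log_rpow_neg_le_sub (by linarith) ((Real.exp_le_exp.2 (by linarith)).trans hk)
      ((Real.le_log_iff_exp_le (by positivity)).2 hk)
    simp only [a]
    rwa [show ((k + 1 + N : ℕ) : ℝ) = (k + N : ℕ) + 1 by push_cast; ring]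
  have hmono : Monotone fun k => a (k + N) := monotone_nat_of_le_succ fun k => by
    linarith [hgrowth k, Real.rpow_nonneg (Log_pos ((k + 1 + N : ℕ) : ℝ)).le (-α)]
  have hsum := summable_sub_mul_measureReal_lt hmono
    (div_nonneg (Nat.cast_nonneg _) (Real.rpow_nonneg (Log_pos _).le _)) hXp fun ω => by positivity
  refine (summable_nat_add_iff (N + 1)).1 ((hsum.mul_left 2).of_nonneg_of_le
    (fun k => mul_nonneg (Real.rpow_nonneg (Log_pos _).le _) ENNReal.toReal_nonneg) fun k => ?_)
  rw [show k + (N + 1) = k + 1 + N by omega, ← mul_assoc]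
  exact mul_le_mul_of_nonneg_right (by linarith [hgrowth k]) measureReal_nonneg

theorem stmt_11 {Ω : Type*} [MeasurableSpace Ω] (μ : Measure Ω) [IsProbabilityMeasure μ]
    (X : Ω → ℝ) (hXm : Measurable X)
    (p : ℝ) (hp : 0 < p) (hXp : Integrable (fun ω => |X ω| ^ p) μ)
    (α : ℝ) (hα : 1 < α) :
    Summable (fun k : ℕ =>
      Log k ^ (-α) * (μ {ω | (k : ℝ) / Log k ^ α < |X ω| ^ p}).toReal) :=
  stmt_11_general μ X p hXp α hα
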